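/- A single-hidden-layer ReLU network f : ℝⁿ → ℝ with h hidden units induces a positive decision region {x | f x > 0} having at most 2ʰ connected components. -/

import Mathlib

/-!
Group the points of `{f > 0}` by activation pattern, the set of hidden units with positive
pre-activation. On a fixed pattern `f` is affine, so the positive points with that pattern form
a convex, hence preconnected, set, and lie in one component. There are `2 ^ h` patterns.
-/

open Set

theorem finite_connectedComponentIn_and_card_le_of_isPreconnected_fibers
    {X ι : Type*} [TopologicalSpace X] [Finite ι] {S : Set X} (σ : X → ι)
    (hσ : ∀ i, IsPreconnected (S ∩ σ ⁻¹' {i})) :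
    {C : Set X | ∃ x ∈ S, C = connectedComponentIn S x}.Finite ∧
    Nat.card {C : Set X | ∃ x ∈ S, C = connectedComponentIn S x} ≤ Nat.card ι := by
  rcases isEmpty_or_nonempty X with hX | hX
  · simp [Set.eq_empty_of_isEmpty S]
  set g : ι → Set X := fun i => connectedComponentIn S (Function.invFunOn σ S i)
  have hsub : {C : Set X | ∃ x ∈ S, C = connectedComponentIn S x} ⊆ range g := by
    rintro _ ⟨x, hx, rfl⟩
    obtain ⟨hyS, hy⟩ := Function.invFunOn_pos (b := σ x) ⟨x, hx, rfl⟩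
    refine ⟨σ x, (connectedComponentIn_eq ?_).symm⟩
    exact (hσ (σ x)).subset_connectedComponentIn ⟨hx, rfl⟩ inter_subset_left ⟨hyS, hy⟩
  exact ⟨(finite_range g).subset hsub,
    (Nat.card_mono (finite_range g) hsub).trans (Finite.card_range_le g)⟩

section ReLU

variable {E ι : Type*} [AddCommGroup E] [Module ℝ E]

theorem AffineMap.finset_sum_apply (s : Finset ι) (g : ι → E →ᵃ[ℝ] ℝ) (x : E) :
    (∑ i ∈ s, g i) x = ∑ i ∈ s, g i x :=
  map_sum (AddMonoidHom.mk' (fun g : E →ᵃ[ℝ] ℝ => g x) fun _ _ => rfl) g s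

variable [Fintype ι]

noncomputable def activationPattern (ℓ : ι → E →ᵃ[ℝ] ℝ) (x : E) : Finset ι :=
  {i | 0 < ℓ i x}

theorem sum_mul_max_zero_eq_sum_activationPattern (ℓ : ι → E →ᵃ[ℝ] ℝ) (v : ι → ℝ) (x : E) :
    ∑ i, v i * max 0 (ℓ i x) = ∑ i ∈ activationPattern ℓ x, v i * ℓ i x := by
  rw [activationPattern, Finset.sum_filter]
  refine Finset.sum_congr rfl fun i _ => ?_
  split_ifs with hi
  · rw [max_eq_right hi.le]
  · rw [max_eq_left (not_lt.mp hi), mul_zero]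

theorem convex_activationPattern_preimage (ℓ : ι → E →ᵃ[ℝ] ℝ) (s : Finset ι) :
    Convex ℝ (activationPattern ℓ ⁻¹' {s}) := by
  have : activationPattern ℓ ⁻¹' {s} = ⋂ i, {x | 0 < ℓ i x ↔ i ∈ s} := by
    ext x
    simp [activationPattern, Finset.ext_iff, iff_comm]
  rw [this]
  refine convex_iInter fun i => ?_
  by_cases hi : i ∈ s
  · simp only [hi, iff_true]
    exact (convex_Ioi 0).affine_preimage (ℓ i)
  · simp only [hi, iff_false, not_lt]
    exact (convex_Iic 0).affine_preimage (ℓ i)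

theorem convex_pos_reluNetwork_inter_activationPattern_preimage (ℓ : ι → E →ᵃ[ℝ] ℝ)
    (v : ι → ℝ) (c : ℝ) (s : Finset ι) :
    Convex ℝ ({x | 0 < ∑ i, v i * max 0 (ℓ i x) + c} ∩ activationPattern ℓ ⁻¹' {s}) := by
  -- On the cell of pattern `s` the network agrees with the affine map `∑ i ∈ s, v i • ℓ i + c`.
  set g : E →ᵃ[ℝ] ℝ := ∑ i ∈ s, v i • ℓ i + AffineMap.const ℝ E c
  have : {x | 0 < ∑ i, v i * max 0 (ℓ i x) + c} ∩ activationPattern ℓ ⁻¹' {s} =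
      g ⁻¹' Ioi 0 ∩ activationPattern ℓ ⁻¹' {s} := by
    ext x
    simp only [mem_inter_iff, mem_ofPred_eq, mem_preimage, mem_singleton_iff, mem_Ioi,
      and_congr_left_iff]
    rintro rfl
    simp [g, sum_mul_max_zero_eq_sum_activationPattern, AffineMap.finset_sum_apply]
  rw [this]
  exact ((convex_Ioi 0).affine_preimage g).inter (convex_activationPattern_preimage ℓ s)

end ReLU

theorem relu_network_components_le_two_pow {n h : ℕ}
    (w : Fin h → EuclideanSpace ℝ (Fin n)) (v b : Fin h → ℝ) (c : ℝ)
    (f : EuclideanSpace ℝ (Fin n) → ℝ)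
    (hf : ∀ x, f x = ∑ i, v i * max 0 ((inner ℝ (w i) x : ℝ) + b i) + c) :
    {C : Set (EuclideanSpace ℝ (Fin n)) |
        ∃ x ∈ {y | 0 < f y}, C = connectedComponentIn {y | 0 < f y} x}.Finite ∧
    Nat.card {C : Set (EuclideanSpace ℝ (Fin n)) |
        ∃ x ∈ {y | 0 < f y}, C = connectedComponentIn {y | 0 < f y} x} ≤ 2 ^ h := by
  let ℓ : Fin h → EuclideanSpace ℝ (Fin n) →ᵃ[ℝ] ℝ :=
    fun i => (innerₛₗ ℝ (w i)).toAffineMap + AffineMap.const ℝ _ (b i)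
  obtain rfl : f = fun x => ∑ i, v i * max 0 (ℓ i x) + c := funext hf
  have := finite_connectedComponentIn_and_card_le_of_isPreconnected_fibers
    (activationPattern ℓ) fun s =>
      (convex_pos_reluNetwork_inter_activationPattern_preimage ℓ v c s).isPreconnected
  rwa [Nat.card_eq_fintype_card (α := Finset (Fin h)), Fintype.card_finset,
    Fintype.card_fin] at this
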